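/- Let n ≥ 1 and let q ∈ ℂ be nonzero and not a root of unity. Let φ be a ℂ-algebra automorphism of 𝔥_n(q) that maps V into V (a graded automorphism). Then there exist a permutation π of Fin n and nonzero scalars ζ_1, …, ζ_n ∈ ℂ such that φ(z_i) = ζ_i · z_{π(i)} for every i. -/

import Mathlib

/-!
`𝔥_n(q)` acts on the space with basis `e_(m,d)`, `m ∈ ℕ^(n)`, `d ∈ ℕ`: `y_i` raises `m_i`, `x_i`
lowers it with coefficient the quantum integer `[m_i]_q`, `z_i` multiplies by `q ^ m_i`, and
`x_i, y_i` raise the auxiliary degree `d` by one, `z_i` by two. Matrix coefficients of this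
representation recover the coordinates of an element of `V`; in particular the generators are
linearly independent.

Write `a, b, u ∈ V` for `φ(x_i), φ(y_i), φ(z_i)`. The degree-one part of `ab - q⁻¹ba = u` shows
that `u` is a combination of the `z_l`. If two different `z_l` occurred in `u`, the relations
`au = q ua` and `bu = q⁻¹ ub` would kill the `x`- and `y`-coordinates of `a` and `b`; but then
`ab - q⁻¹ba` has no degree-two part, so `u = 0`. Hence `φ(z_i) = ζ_i z_{π(i)}`, and `π` is
injective because the `z_l` are linearly independent.
-/

noncomputable section

open scoped BigOperators

namespace QHeisenberg

/-- Index type for the `3n` generators: `x`-, `y`-, and `z`-variables. -/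
abbrev GenIdx (n : ℕ) := Fin n ⊕ (Fin n ⊕ Fin n)

/-- The `x_i` generator in the free algebra. -/
def fX (n : ℕ) (i : Fin n) : FreeAlgebra ℂ (GenIdx n) := FreeAlgebra.ι ℂ (Sum.inl i)

/-- The `y_i` generator in the free algebra. -/
def fY (n : ℕ) (i : Fin n) : FreeAlgebra ℂ (GenIdx n) := FreeAlgebra.ι ℂ (Sum.inr (Sum.inl i))

/-- The `z_i` generator in the free algebra. -/
def fZ (n : ℕ) (i : Fin n) : FreeAlgebra ℂ (GenIdx n) := FreeAlgebra.ι ℂ (Sum.inr (Sum.inr i))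

/-- The defining relations of the q-Heisenberg algebra `𝔥_n(q)`. -/
inductive Rel (n : ℕ) (q : ℂ) :
    FreeAlgebra ℂ (GenIdx n) → FreeAlgebra ℂ (GenIdx n) → Prop
  | xx (i j : Fin n) : Rel n q (fX n i * fX n j) (fX n j * fX n i)
  | yy (i j : Fin n) : Rel n q (fY n i * fY n j) (fY n j * fY n i)
  | zz (i j : Fin n) : Rel n q (fZ n i * fZ n j) (fZ n j * fZ n i)
  | xz (i : Fin n) : Rel n q (fX n i * fZ n i) (q • (fZ n i * fX n i))
  | yz (i : Fin n) : Rel n q (fY n i * fZ n i) (q⁻¹ • (fZ n i * fY n i))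
  | xy (i : Fin n) : Rel n q (fX n i * fY n i) (q⁻¹ • (fY n i * fX n i) + fZ n i)
  | xyne (i j : Fin n) : i ≠ j → Rel n q (fX n i * fY n j) (fY n j * fX n i)
  | xzne (i j : Fin n) : i ≠ j → Rel n q (fX n i * fZ n j) (fZ n j * fX n i)
  | yzne (i j : Fin n) : i ≠ j → Rel n q (fY n i * fZ n j) (fZ n j * fY n i)

/-- The q-Heisenberg algebra `𝔥_n(q)`. -/
abbrev H (n : ℕ) (q : ℂ) := RingQuot (Rel n q)

/-- The generator `x_i` of `𝔥_n(q)`. -/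
def X (n : ℕ) (q : ℂ) (i : Fin n) : H n q := RingQuot.mkAlgHom ℂ (Rel n q) (fX n i)

/-- The generator `y_i` of `𝔥_n(q)`. -/
def Y (n : ℕ) (q : ℂ) (i : Fin n) : H n q := RingQuot.mkAlgHom ℂ (Rel n q) (fY n i)

/-- The generator `z_i` of `𝔥_n(q)`. -/
def Z (n : ℕ) (q : ℂ) (i : Fin n) : H n q := RingQuot.mkAlgHom ℂ (Rel n q) (fZ n i)

/-- `q` is not a root of unity: `q ^ k ≠ 1` for every `k ≥ 1`. -/
def NotRootOfUnity (q : ℂ) : Prop := ∀ k : ℕ, 1 ≤ k → q ^ k ≠ 1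

end QHeisenberg

namespace QHeisenberg

/-- The `ℂ`-linear span `V` of the `3n` generators `x_i, y_i, z_i` of `𝔥_n(q)`. -/
def genSpan (n : ℕ) (q : ℂ) : Submodule ℂ (H n q) :=
  Submodule.span ℂ (Set.range (X n q) ∪ Set.range (Y n q) ∪ Set.range (Z n q))

open Finsupp

variable {n : ℕ} {q : ℂ}

lemma NotRootOfUnity.ne_one (hq : NotRootOfUnity q) : q ≠ 1 := by
  simpa using hq 1 le_rfl

/-- The symmetric quantum integer `[k]_q = (q ^ k - q ^ (-k)) / (q - q⁻¹)`. -/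
def qInt (q : ℂ) : ℕ → ℂ
  | 0 => 0
  | k + 1 => q⁻¹ * qInt q k + q ^ k

lemma qInt_mul_pow_mul (hq : q ≠ 0) (k : ℕ) :
    qInt q k * q ^ k * (q ^ 2 - 1) = q * (q ^ (2 * k) - 1) := by
  induction k with
  | zero => simp [qInt]
  | succ k ih =>
    calc qInt q (k + 1) * q ^ (k + 1) * (q ^ 2 - 1)
        = (q⁻¹ * q) * (qInt q k * q ^ k * (q ^ 2 - 1)) + q ^ (2 * k) * q * (q ^ 2 - 1) := by
          rw [qInt]
          ring
      _ = q * (q ^ (2 * (k + 1)) - 1) := by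
          rw [inv_mul_cancel₀ hq, ih]
          ring

lemma qInt_succ_ne_zero (hq : q ≠ 0) (hq' : NotRootOfUnity q) (k : ℕ) : qInt q (k + 1) ≠ 0 := by
  intro h
  have := qInt_mul_pow_mul hq (k + 1)
  rw [h, zero_mul, zero_mul, eq_comm] at this
  exact mul_ne_zero hq (sub_ne_zero.mpr (hq' _ (by omega))) this

/-- A Fock-type space: `basisVec (m, d)` stands for the monomial `y^m` placed in degree `d`. -/
abbrev Fock (n : ℕ) := (Fin n →₀ ℕ) × ℕ →₀ ℂ

def basisVec (p : (Fin n →₀ ℕ) × ℕ) : Fock n := single p 1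

def genImage (n : ℕ) (q : ℂ) : GenIdx n → (Fin n →₀ ℕ) × ℕ → Fock n
  | .inl i => fun p => qInt q (p.1 i) • basisVec (p.1 - single i 1, p.2 + 1)
  | .inr (.inl i) => fun p => basisVec (p.1 + single i 1, p.2 + 1)
  | .inr (.inr i) => fun p => q ^ p.1 i • basisVec (p.1, p.2 + 2)

def genOp (n : ℕ) (q : ℂ) (g : GenIdx n) : Module.End ℂ (Fock n) :=
  linearCombination ℂ (genImage n q g)

lemma genOp_basisVec (g : GenIdx n) (p : (Fin n →₀ ℕ) × ℕ) :
    genOp n q g (basisVec p) = genImage n q g p := by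
  simp [genOp, basisVec]

lemma Fock.end_ext {L M : Module.End ℂ (Fock n)} (h : ∀ p, L (basisVec p) = M (basisVec p)) :
    L = M :=
  Finsupp.basisSingleOne.ext h

section Relations

variable (n q)

local notation "opX" i => genOp n q (Sum.inl i)
local notation "opY" i => genOp n q (Sum.inr (Sum.inl i))
local notation "opZ" i => genOp n q (Sum.inr (Sum.inr i))

lemma opX_mul_opX (i j : Fin n) : (opX i) * (opX j) = (opX j) * (opX i) := by
  refine Fock.end_ext fun ⟨m, d⟩ => ?_
  rcases eq_or_ne i j with rfl | hij
  · rfl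
  simp only [Module.End.mul_apply, genOp_basisVec, genImage, map_smul, smul_smul,
    Nat.add_assoc, tsub_apply, single_apply, if_neg hij, if_neg hij.symm, tsub_zero,
    tsub_right_comm, mul_comm]

lemma opY_mul_opY (i j : Fin n) : (opY i) * (opY j) = (opY j) * (opY i) := by
  refine Fock.end_ext fun ⟨m, d⟩ => ?_
  simp only [Module.End.mul_apply, genOp_basisVec, genImage, add_right_comm m]

lemma opZ_mul_opZ (i j : Fin n) : (opZ i) * (opZ j) = (opZ j) * (opZ i) := by
  refine Fock.end_ext fun ⟨m, d⟩ => ?_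
  simp only [Module.End.mul_apply, genOp_basisVec, genImage, map_smul, smul_smul, mul_comm]

lemma opX_mul_opZ (i : Fin n) : (opX i) * (opZ i) = q • ((opZ i) * (opX i)) := by
  refine Fock.end_ext fun ⟨m, d⟩ => ?_
  simp only [Module.End.mul_apply, LinearMap.smul_apply, genOp_basisVec, genImage, map_smul,
    smul_smul, Nat.add_right_comm d 1 2]
  congr 1
  rcases hmi : m i with _ | k
  · simp [qInt]
  · rw [tsub_apply, hmi, single_eq_same, Nat.add_sub_cancel, pow_succ]
    ring

lemma opY_mul_opZ (hq : q ≠ 0) (i : Fin n) : (opY i) * (opZ i) = q⁻¹ • ((opZ i) * (opY i)) := by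
  refine Fock.end_ext fun ⟨m, d⟩ => ?_
  simp only [Module.End.mul_apply, LinearMap.smul_apply, genOp_basisVec, genImage, map_smul,
    smul_smul, Nat.add_right_comm d 1 2, Finsupp.add_apply, single_eq_same, pow_succ]
  field_simp

lemma opX_mul_opY (i : Fin n) : (opX i) * (opY i) = q⁻¹ • ((opY i) * (opX i)) + (opZ i) := by
  refine Fock.end_ext fun ⟨m, d⟩ => ?_
  simp only [Module.End.mul_apply, LinearMap.smul_apply, LinearMap.add_apply, genOp_basisVec,
    genImage, map_smul, smul_smul, Nat.add_assoc, Nat.reduceAdd, Finsupp.add_apply, single_eq_same,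
    add_tsub_cancel_right]
  rcases hmi : m i with _ | k
  · have h0 : m - single i 1 = m := by
      ext a
      rcases eq_or_ne i a with rfl | hi
      · simp [hmi]
      · simp [single_eq_of_ne' hi]
    simp [h0, qInt]
  · have h1 : m - single i 1 + single i 1 = m := by
      ext a
      rcases eq_or_ne i a with rfl | hi
      · simp [hmi]
      · simp [single_eq_of_ne' hi]
    rw [h1, qInt, ← add_smul]

lemma opX_mul_opY_of_ne {i j : Fin n} (h : i ≠ j) : (opX i) * (opY j) = (opY j) * (opX i) := by
  refine Fock.end_ext fun ⟨m, d⟩ => ?_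
  have hm : m + single j 1 - single i 1 = m - single i 1 + single j 1 := by
    ext a
    rcases eq_or_ne i a with rfl | hi
    · simp [single_eq_of_ne' h.symm]
    · simp [single_eq_of_ne' hi]
  simp only [Module.End.mul_apply, genOp_basisVec, genImage, map_smul, Finsupp.add_apply,
    single_eq_of_ne' h.symm, add_zero, hm]

lemma opX_mul_opZ_of_ne {i j : Fin n} (h : i ≠ j) : (opX i) * (opZ j) = (opZ j) * (opX i) := by
  refine Fock.end_ext fun ⟨m, d⟩ => ?_
  simp only [Module.End.mul_apply, genOp_basisVec, genImage, map_smul, smul_smul,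
    Nat.add_right_comm d 1 2, tsub_apply, single_eq_of_ne' h, tsub_zero, mul_comm]

lemma opY_mul_opZ_of_ne {i j : Fin n} (h : i ≠ j) : (opY i) * (opZ j) = (opZ j) * (opY i) := by
  refine Fock.end_ext fun ⟨m, d⟩ => ?_
  simp only [Module.End.mul_apply, genOp_basisVec, genImage, map_smul,
    Nat.add_right_comm d 1 2, Finsupp.add_apply, single_eq_of_ne' h, add_zero]

end Relations

def rep (n : ℕ) (q : ℂ) (hq : q ≠ 0) : H n q →ₐ[ℂ] Module.End ℂ (Fock n) :=
  RingQuot.liftAlgHom ℂ ⟨FreeAlgebra.lift ℂ (genOp n q), fun _ _ r => by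
    cases r with
    | xx i j => simpa [fX] using opX_mul_opX n q i j
    | yy i j => simpa [fY] using opY_mul_opY n q i j
    | zz i j => simpa [fZ] using opZ_mul_opZ n q i j
    | xz i => simpa [fX, fZ] using opX_mul_opZ n q i
    | yz i => simpa [fY, fZ] using opY_mul_opZ n q hq i
    | xy i => simpa [fX, fY, fZ] using opX_mul_opY n q i
    | xyne i j h => simpa [fX, fY] using opX_mul_opY_of_ne n q h
    | xzne i j h => simpa [fX, fZ] using opX_mul_opZ_of_ne n q h
    | yzne i j h => simpa [fY, fZ] using opY_mul_opZ_of_ne n q h⟩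

def gen (n : ℕ) (q : ℂ) : GenIdx n → H n q := Sum.elim (X n q) (Sum.elim (Y n q) (Z n q))

lemma rep_gen (hq : q ≠ 0) (g : GenIdx n) : rep n q hq (gen n q g) = genOp n q g := by
  rcases g with i | i | i <;>
    simp [gen, X, Y, Z, fX, fY, fZ, rep, RingQuot.liftAlgHom_mkAlgHom_apply]

lemma X_mul_Z (i : Fin n) : X n q i * Z n q i = q • (Z n q i * X n q i) := by
  simpa [X, Z] using RingQuot.mkAlgHom_rel ℂ (Rel.xz (q := q) i)

lemma Y_mul_Z (i : Fin n) : Y n q i * Z n q i = q⁻¹ • (Z n q i * Y n q i) := by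
  simpa [Y, Z] using RingQuot.mkAlgHom_rel ℂ (Rel.yz (q := q) i)

lemma X_mul_Y (i : Fin n) : X n q i * Y n q i = q⁻¹ • (Y n q i * X n q i) + Z n q i := by
  simpa [X, Y, Z] using RingQuot.mkAlgHom_rel ℂ (Rel.xy (q := q) i)

lemma mem_genSpan_iff {v : H n q} :
    v ∈ genSpan n q ↔ ∃ w : GenIdx n → ℂ, ∑ g, w g • gen n q g = v := by
  have : Set.range (X n q) ∪ Set.range (Y n q) ∪ Set.range (Z n q) = Set.range (gen n q) := by
    rw [gen, Set.Sum.elim_range, Set.Sum.elim_range, Set.union_assoc]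
  rw [genSpan, this, Submodule.mem_span_range_iff_exists_fun]

def linOp (n : ℕ) (q : ℂ) (w : GenIdx n → ℂ) : Module.End ℂ (Fock n) := ∑ g, w g • genOp n q g

lemma rep_sum_smul_gen (hq : q ≠ 0) (w : GenIdx n → ℂ) :
    rep n q hq (∑ g, w g • gen n q g) = linOp n q w := by
  simp only [map_sum, map_smul, rep_gen, linOp]

def zPart (w : GenIdx n → ℂ) (i : Fin n) : ℂ := w (.inr (.inr i))

/-- The scalar by which `∑ c_i z_i` acts on `basisVec (m, d)`, up to the shift of degree. -/
def zSymbol (q : ℂ) (c : Fin n → ℂ) (m : Fin n →₀ ℕ) : ℂ := ∑ i, c i * q ^ m i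

lemma zSymbol_add_single (c : Fin n → ℂ) (m : Fin n →₀ ℕ) (k : Fin n) :
    zSymbol q c (m + single k 1) = zSymbol q c m + (q - 1) * q ^ m k * c k := by
  have : ∀ i, c i * q ^ (m + single k 1 : Fin n →₀ ℕ) i
      = c i * q ^ m i + if i = k then (q - 1) * q ^ m k * c k else 0 := by
    intro i
    rcases eq_or_ne i k with rfl | hik
    · simp only [Finsupp.add_apply, single_eq_same, if_pos, pow_succ]
      ring
    · simp [single_eq_of_ne' hik.symm, hik]
  simp only [zSymbol, this, Finset.sum_add_distrib, Finset.sum_ite_eq', Finset.mem_univ, if_true]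

lemma eq_zero_of_zSymbol_eq_zero (hq1 : q ≠ 1) {c : Fin n → ℂ} (h : ∀ m, zSymbol q c m = 0) :
    c = 0 := by
  funext k
  have := zSymbol_add_single (q := q) c 0 k
  rw [h, h, zero_add, coe_zero, Pi.zero_apply, pow_zero, mul_one, eq_comm] at this
  exact (mul_eq_zero.mp this).resolve_left (sub_ne_zero.mpr hq1)

lemma linOp_basisVec (w : GenIdx n → ℂ) (m : Fin n →₀ ℕ) (d : ℕ) :
    linOp n q w (basisVec (m, d)) =
      (∑ i, (w (.inl i) * qInt q (m i)) • basisVec (m - single i 1, d + 1)) +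
      (∑ i, w (.inr (.inl i)) • basisVec (m + single i 1, d + 1)) +
      zSymbol q (zPart w) m • basisVec (m, d + 2) := by
  rw [linOp, LinearMap.sum_apply, Fintype.sum_sum_type, Fintype.sum_sum_type]
  simp only [LinearMap.smul_apply, genOp_basisVec, genImage, smul_smul, zSymbol, zPart,
    Finset.sum_smul, add_assoc]

lemma linOp_basisVec_apply_of_ne (w : GenIdx n → ℂ) (m m' : Fin n →₀ ℕ) {d d' : ℕ}
    (h1 : d' ≠ d + 1) (h2 : d' ≠ d + 2) : linOp n q w (basisVec (m, d)) (m', d') = 0 := by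
  rw [linOp_basisVec]
  simp [basisVec, h1.symm, h2.symm]

lemma linOp_basisVec_apply_add_single (w : GenIdx n → ℂ) (m : Fin n →₀ ℕ) (k : Fin n) (d : ℕ) :
    linOp n q w (basisVec (m, d)) (m + single k 1, d + 1) = w (.inr (.inl k)) := by
  have hx : ∀ i, m - single i 1 ≠ m + single k 1 := fun i h => by
    have := DFunLike.congr_fun h k
    simp only [tsub_apply, Finsupp.add_apply, single_eq_same] at this
    omega
  have hy : ∀ i, m + single i 1 = m + single k 1 ↔ i = k := fun i =>
    (add_right_inj m).trans (single_left_inj one_ne_zero)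
  rw [linOp_basisVec]
  simp [basisVec, single_apply, hx, hy]

lemma linOp_basisVec_add_single_apply (w : GenIdx n → ℂ) (m : Fin n →₀ ℕ) (k : Fin n) (d : ℕ) :
    linOp n q w (basisVec (m + single k 1, d)) (m, d + 1) = w (.inl k) * qInt q (m k + 1) := by
  have hx : ∀ i, m + single k 1 - single i 1 = m ↔ i = k := fun i => by
    refine ⟨fun h => by_contra fun hik => ?_, fun h => h ▸ add_tsub_cancel_right m _⟩
    simpa [single_eq_of_ne' hik] using DFunLike.congr_fun h k
  have hy : ∀ i, m + single k 1 + single i 1 ≠ m := fun i h => by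
    have := DFunLike.congr_fun h i
    simp only [Finsupp.add_apply, single_eq_same] at this
    omega
  rw [linOp_basisVec]
  simp [basisVec, single_apply, hx, hy]

lemma linOp_basisVec_apply_self (w : GenIdx n → ℂ) (m : Fin n →₀ ℕ) (d : ℕ) :
    linOp n q w (basisVec (m, d)) (m, d + 2) = zSymbol q (zPart w) m := by
  rw [linOp_basisVec]
  simp [basisVec]

/-- Products of two elements of `V` raise the degree by at least two. -/
lemma linOp_linOp_basisVec_apply (w w' : GenIdx n → ℂ) (m m' : Fin n →₀ ℕ) (d : ℕ) :
    linOp n q w (linOp n q w' (basisVec (m, d))) (m', d + 1) = 0 := by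
  simp only [linOp_basisVec (w := w'), map_add, map_sum, map_smul,
    Finsupp.add_apply, Finsupp.finsetSum_apply, Finsupp.smul_apply]
  simp [linOp_basisVec_apply_of_ne]

def IsPureZ (w : GenIdx n → ℂ) : Prop := (∀ i, w (.inl i) = 0) ∧ ∀ i, w (.inr (.inl i)) = 0

namespace IsPureZ

variable {u : GenIdx n → ℂ}

lemma eq_zero (hu : IsPureZ u) (h : zPart u = 0) : u = 0 := by
  funext g
  rcases g with i | i | i
  exacts [hu.1 i, hu.2 i, congrFun h i]

lemma linOp_basisVec (hu : IsPureZ u) (m : Fin n →₀ ℕ) (d : ℕ) :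
    linOp n q u (basisVec (m, d)) = zSymbol q (zPart u) m • basisVec (m, d + 2) := by
  simp [QHeisenberg.linOp_basisVec, hu.1, hu.2]

lemma linOp_apply (hu : IsPureZ u) (v : Fock n) (m : Fin n →₀ ℕ) (d : ℕ) :
    linOp n q u v (m, d + 2) = zSymbol q (zPart u) m * v (m, d) := by
  induction v using Finsupp.induction_linear with
  | zero => simp
  | add f g hf hg => simp [hf, hg, mul_add]
  | single p b =>
    obtain ⟨m', d'⟩ := p
    have : single (m', d') b = b • basisVec (m', d') := by simp [basisVec]
    rw [this, map_smul, hu.linOp_basisVec]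
    by_cases h : m' = m ∧ d' = d
    · obtain ⟨rfl, rfl⟩ := h
      simp [basisVec]
      ring
    · simp [basisVec, h]

end IsPureZ

lemma isPureZ_of_linOp_apply_eq_zero {u : GenIdx n → ℂ}
    (h : ∀ m m', linOp n q u (basisVec (m, 0)) (m', 1) = 0) : IsPureZ u := by
  refine ⟨fun k => ?_, fun k => ?_⟩
  · simpa [qInt] using (linOp_basisVec_add_single_apply (q := q) u 0 k 0).symm.trans (h _ 0)
  · simpa using (linOp_basisVec_apply_add_single (q := q) u 0 k 0).symm.trans (h 0 _)

lemma eq_zero_of_linOp_eq_zero (hq1 : q ≠ 1) {w : GenIdx n → ℂ} (h : linOp n q w = 0) :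
    w = 0 := by
  have hw : IsPureZ w := isPureZ_of_linOp_apply_eq_zero (q := q) fun m m' => by simp [h]
  refine hw.eq_zero (eq_zero_of_zSymbol_eq_zero hq1 fun m => ?_)
  simpa [h] using (linOp_basisVec_apply_self (q := q) w m 0).symm

lemma linearIndependent_gen (hq : q ≠ 0) (hq1 : q ≠ 1) : LinearIndependent ℂ (gen n q) :=
  Fintype.linearIndependent_iff.mpr fun w hw => congrFun (eq_zero_of_linOp_eq_zero hq1 <| by
    rw [← rep_sum_smul_gen hq, hw, map_zero])

section QCommutation

variable {u w : GenIdx n → ℂ} {r : ℂ}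

lemma IsPureZ.inl_mul_eq_zero_of_mul_eq (hq : q ≠ 0) (hq' : NotRootOfUnity q) (hu : IsPureZ u)
    (h : linOp n q w * linOp n q u = r • (linOp n q u * linOp n q w))
    (k : Fin n) (m : Fin n →₀ ℕ) :
    w (.inl k) * (zSymbol q (zPart u) (m + single k 1) - r * zSymbol q (zPart u) m) = 0 := by
  have := congrArg (fun L => L (basisVec (m + single k 1, 0)) (m, 3)) h
  simp only [Module.End.mul_apply, LinearMap.smul_apply, Finsupp.smul_apply, smul_eq_mul,
    hu.linOp_basisVec, map_smul, hu.linOp_apply _ m 1, linOp_basisVec_add_single_apply] at this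
  have : qInt q (m k + 1) * (w (.inl k) *
      (zSymbol q (zPart u) (m + single k 1) - r * zSymbol q (zPart u) m)) = 0 := by
    linear_combination this
  exact (mul_eq_zero.mp this).resolve_left (qInt_succ_ne_zero hq hq' (m k))

lemma IsPureZ.inr_inl_mul_eq_zero_of_mul_eq (hu : IsPureZ u)
    (h : linOp n q w * linOp n q u = r • (linOp n q u * linOp n q w))
    (k : Fin n) (m : Fin n →₀ ℕ) :
    w (.inr (.inl k)) * (r * zSymbol q (zPart u) (m + single k 1) - zSymbol q (zPart u) m) =
      0 := by
  have := congrArg (fun L => L (basisVec (m, 0)) (m + single k 1, 3)) h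
  simp only [Module.End.mul_apply, LinearMap.smul_apply, Finsupp.smul_apply, smul_eq_mul,
    hu.linOp_basisVec, map_smul, hu.linOp_apply _ _ 1, linOp_basisVec_apply_add_single] at this
  linear_combination -this

end QCommutation

lemma mul_eq_zero_of_forall_zSymbol (hq1 : q ≠ 1) {c : Fin n → ℂ} {t σ ρ : ℂ} (hσρ : σ ≠ ρ)
    {k l : Fin n} (hlk : l ≠ k)
    (h : ∀ m, t * (σ * zSymbol q c (m + single k 1) - ρ * zSymbol q c m) = 0) : t * c l = 0 := by
  have hsingle (j : Fin n) : zSymbol q c (single j 1) = zSymbol q c 0 + (q - 1) * c j := by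
    simpa using zSymbol_add_single (q := q) c 0 j
  have h0 := h 0
  have hl := h (single l 1)
  rw [zero_add, hsingle] at h0
  rw [add_comm, zSymbol_add_single, hsingle, hsingle, single_eq_of_ne' hlk.symm, pow_zero] at hl
  have : ((q - 1) * (σ - ρ)) * (t * c l) = 0 := by linear_combination hl - h0
  exact (mul_eq_zero.mp this).resolve_left
    (mul_ne_zero (sub_ne_zero.mpr hq1) (sub_ne_zero.mpr hσρ))

section Commutator

variable {a b u : GenIdx n → ℂ} {r : ℂ}

lemma isPureZ_of_mul_eq_smul_mul_add
    (h : linOp n q a * linOp n q b = r • (linOp n q b * linOp n q a) + linOp n q u) :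
    IsPureZ u :=
  isPureZ_of_linOp_apply_eq_zero (q := q) fun m m' => by
    have := congrArg (fun L => L (basisVec (m, 0)) (m', 0 + 1)) h
    simp only [Module.End.mul_apply, LinearMap.add_apply, LinearMap.smul_apply, Finsupp.add_apply,
      Finsupp.smul_apply, linOp_linOp_basisVec_apply] at this
    simpa using this.symm

lemma IsPureZ.zSymbol_eq_zero_of_mul_eq_smul_mul_add (ha : IsPureZ a) (hb : IsPureZ b)
    (h : linOp n q a * linOp n q b = r • (linOp n q b * linOp n q a) + linOp n q u)
    (m : Fin n →₀ ℕ) : zSymbol q (zPart u) m = 0 := by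
  have := congrArg (fun L => L (basisVec (m, 0)) (m, 2)) h
  simp only [Module.End.mul_apply, LinearMap.add_apply, LinearMap.smul_apply, Finsupp.add_apply,
    Finsupp.smul_apply, ha.linOp_basisVec, hb.linOp_basisVec, map_smul,
    linOp_basisVec_apply_self u m 0] at this
  simpa [basisVec] using this.symm

end Commutator

/-- Here `a, b, u` are the coordinates of the images of `x_i, y_i, z_i` under an algebra
endomorphism that preserves `V`. -/
theorem exists_single_z_of_relations (hq : q ≠ 0) (hq' : NotRootOfUnity q) {a b u : GenIdx n → ℂ}
    (hxz : linOp n q a * linOp n q u = q • (linOp n q u * linOp n q a))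
    (hyz : linOp n q b * linOp n q u = q⁻¹ • (linOp n q u * linOp n q b))
    (hxy : linOp n q a * linOp n q b = q⁻¹ • (linOp n q b * linOp n q a) + linOp n q u)
    (hu : u ≠ 0) : ∃ l, ∀ g ≠ .inr (.inr l), u g = 0 := by
  have hq1 := hq'.ne_one
  have hqinv1 : q⁻¹ ≠ 1 := inv_ne_one.mpr hq1
  have hpure : IsPureZ u := isPureZ_of_mul_eq_smul_mul_add hxy
  by_contra! hsupp
  have hc (k : Fin n) : ∃ l ≠ k, zPart u l ≠ 0 := by
    obtain ⟨g, hgk, hg⟩ := hsupp k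
    rcases g with l | l | l
    exacts [(hg (hpure.1 l)).elim, (hg (hpure.2 l)).elim, ⟨l, fun h => hgk (h ▸ rfl), hg⟩]
  have cancel {t : ℂ} (k : Fin n) (ht : ∀ l ≠ k, t * zPart u l = 0) : t = 0 := by
    obtain ⟨l, hlk, hl⟩ := hc k
    exact (mul_eq_zero.mp (ht l hlk)).resolve_right hl
  have ha : IsPureZ a :=
    ⟨fun k => cancel k fun l hlk => mul_eq_zero_of_forall_zSymbol hq1 (σ := 1) hq1.symm hlk
      fun m => by simpa only [one_mul] using hpure.inl_mul_eq_zero_of_mul_eq hq hq' hxz k m,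
    fun k => cancel k fun l hlk => mul_eq_zero_of_forall_zSymbol hq1 (ρ := 1) hq1 hlk
      fun m => by simpa only [one_mul] using hpure.inr_inl_mul_eq_zero_of_mul_eq hxz k m⟩
  have hb : IsPureZ b :=
    ⟨fun k => cancel k fun l hlk => mul_eq_zero_of_forall_zSymbol hq1 (σ := 1) hqinv1.symm hlk
      fun m => by simpa only [one_mul] using hpure.inl_mul_eq_zero_of_mul_eq hq hq' hyz k m,
    fun k => cancel k fun l hlk => mul_eq_zero_of_forall_zSymbol hq1 (ρ := 1) hqinv1 hlk
      fun m => by simpa only [one_mul] using hpure.inr_inl_mul_eq_zero_of_mul_eq hyz k m⟩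
  exact hu <| hpure.eq_zero <| eq_zero_of_zSymbol_eq_zero hq1 <|
    ha.zSymbol_eq_zero_of_mul_eq_smul_mul_add hb hxy

lemma Z_ne_zero (hq : q ≠ 0) (hq1 : q ≠ 1) (i : Fin n) : Z n q i ≠ 0 :=
  show gen n q (.inr (.inr i)) ≠ 0 from (linearIndependent_gen hq hq1).ne_zero _

lemma exists_map_Z_eq_smul (hq : q ≠ 0) (hq' : NotRootOfUnity q) (φ : H n q ≃ₐ[ℂ] H n q)
    (hφ : ∀ v ∈ genSpan n q, φ v ∈ genSpan n q) (i : Fin n) :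
    ∃ l, ∃ ζ : ℂ, ζ ≠ 0 ∧ φ (Z n q i) = ζ • Z n q l := by
  have mem {v : H n q} (hv : v ∈ Set.range (X n q) ∪ Set.range (Y n q) ∪ Set.range (Z n q)) :=
    mem_genSpan_iff.mp (hφ v (Submodule.subset_span hv))
  obtain ⟨a, ha⟩ := mem (.inl (.inl ⟨i, rfl⟩))
  obtain ⟨b, hb⟩ := mem (.inl (.inr ⟨i, rfl⟩))
  obtain ⟨u, hu⟩ := mem (.inr ⟨i, rfl⟩)
  let ψ := (rep n q hq).comp (φ : H n q →ₐ[ℂ] H n q)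
  have hψ {v : H n q} {w : GenIdx n → ℂ} (hw : ∑ g, w g • gen n q g = φ v) :
      ψ v = linOp n q w := by
    rw [← rep_sum_smul_gen hq, hw]
    rfl
  have hu0 : u ≠ 0 := by
    rintro rfl
    simp only [Pi.zero_apply, zero_smul, Finset.sum_const_zero] at hu
    exact Z_ne_zero hq hq'.ne_one i ((map_eq_zero_iff φ φ.injective).mp hu.symm)
  obtain ⟨l, hl⟩ := exists_single_z_of_relations hq hq' (a := a) (b := b) (u := u)
    (by simpa only [map_mul, map_smul, hψ ha, hψ hu] using congrArg ψ (X_mul_Z i))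
    (by simpa only [map_mul, map_smul, hψ hb, hψ hu] using congrArg ψ (Y_mul_Z i))
    (by simpa only [map_mul, map_smul, map_add, hψ ha, hψ hb, hψ hu] using
      congrArg ψ (X_mul_Y i))
    hu0
  refine ⟨l, u (.inr (.inr l)), fun h => hu0 (funext fun g => ?_), ?_⟩
  · by_cases hg : g = .inr (.inr l)
    exacts [hg ▸ h, hl g hg]
  · rw [← hu, Fintype.sum_eq_single (.inr (.inr l)) fun g hg => by rw [hl g hg, zero_smul]]
    rfl

theorem graded_automorphism_on_z_general (n : ℕ) (q : ℂ) (hq : q ≠ 0)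
    (hq' : NotRootOfUnity q) (φ : H n q ≃ₐ[ℂ] H n q)
    (hφ : ∀ v ∈ genSpan n q, φ v ∈ genSpan n q) :
    ∃ (π : Equiv.Perm (Fin n)) (ζ : Fin n → ℂ),
      (∀ i, ζ i ≠ 0) ∧ ∀ i, φ (Z n q i) = ζ i • Z n q (π i) := by
  choose π ζ hζ hπ using exists_map_Z_eq_smul hq hq' φ hφ
  have hZ : LinearIndependent ℂ (Z n q) :=
    (linearIndependent_gen hq hq'.ne_one).comp _ (Sum.inr_injective.comp Sum.inr_injective)
  have hπ_inj : Function.Injective π := fun i j hij =>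
    hZ.eq_of_smul_apply_eq_smul_apply (ζ j) (ζ i) i j (hζ j) <| φ.injective <| by
      rw [map_smul, map_smul, hπ, hπ, hij, smul_smul, smul_smul, mul_comm]
  exact ⟨Equiv.ofBijective π hπ_inj.bijective_of_finite, ζ, hζ, hπ⟩

/-- For `q` nonzero and not a root of unity, any graded `ℂ`-algebra
automorphism `φ` of `𝔥_n(q)` (one with `φ(V) ⊆ V`) sends each `z_i` to a nonzero scalar
multiple of `z_{π(i)}` for some permutation `π`. -/
theorem graded_automorphism_on_z (n : ℕ) (hn : 1 ≤ n) (q : ℂ) (hq : q ≠ 0)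
    (hq' : NotRootOfUnity q) (φ : H n q ≃ₐ[ℂ] H n q)
    (hφ : ∀ v ∈ genSpan n q, φ v ∈ genSpan n q) :
    ∃ (π : Equiv.Perm (Fin n)) (ζ : Fin n → ℂ),
      (∀ i, ζ i ≠ 0) ∧ ∀ i, φ (Z n q i) = ζ i • Z n q (π i) :=
  graded_automorphism_on_z_general n q hq hq' φ hφ

end QHeisenberg
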